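/- Let f : ℝ → ℝ be locally integrable, μ-almost periodic, nonnegative a.e. Suppose that for every ε > 0 there exist T₀, N₀ > 0 such that (1/T)∫_0^T (f(x) − f_{N₀}(x)) dx < ε for all T ≥ T₀, where f_N = max(−N, min(f, N)) is the truncation. Then the mean value M{f} = lim_{T→+∞}(1/T)∫_0^T f exists, is finite, and equals lim_{N→+∞} M{f_N}. -/

import Mathlib

open MeasureTheory Filter Set intervalIntegral

noncomputable section

/-- A set `A ⊆ ℝ` is relatively dense. -/
def RelDense (A : Set ℝ) : Prop := ∃ l > 0, ∀ x : ℝ, ∃ τ ∈ A, x < τ ∧ τ < x + l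

/-- The set over which the infimum defining the LIF firing map is taken. -/
def FiringSet (σ : ℝ) (f : ℝ → ℝ) (t : ℝ) : Set ℝ :=
  {t' | t < t' ∧ Real.exp (σ * t) ≤ ∫ u in t..t', (f u - σ) * Real.exp (σ * u)}

/-- `y` is the firing-map value at `t`: the smallest `t' > t` with
`e^{σ t} = ∫_t^{t'} (f u - σ) e^{σ u} du`. -/
def FiringEq (σ : ℝ) (f : ℝ → ℝ) (t y : ℝ) : Prop :=
  IsLeast {t' | t < t' ∧ Real.exp (σ * t) = ∫ u in t..t', (f u - σ) * Real.exp (σ * u)} y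

/-- The Stepanov `S¹` seminorm. -/
def SNorm (f : ℝ → ℝ) : ℝ := ⨆ t : ℝ, ∫ u in t..(t + 1), |f u|

/-- Stepanov `S¹`-almost periodicity. -/
def S1AP (f : ℝ → ℝ) : Prop :=
  ∀ ε > 0, RelDense {τ | SNorm (fun u => f (u + τ) - f u) < ε}

/-- `D(η; f, g) = sup_u μ({t ∈ [u,u+1] : |f t - g t| ≥ η})`. -/
def Dfun (η : ℝ) (f g : ℝ → ℝ) : ℝ :=
  ⨆ u : ℝ, (volume {t ∈ Set.Icc u (u + 1) | η ≤ |f t - g t|}).toReal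

/-- Almost periodicity in the Lebesgue measure (μ-almost periodicity). -/
def MuAP (f : ℝ → ℝ) : Prop :=
  ∀ ε > 0, ∀ η > 0, RelDense {τ | Dfun η (fun t => f (t + τ)) f ≤ ε}

/-- Bohr (uniform) almost periodicity. -/
def BohrAP (g : ℝ → ℝ) : Prop :=
  Continuous g ∧ ∀ ε > 0, RelDense {τ | (⨆ t : ℝ, |g (t + τ) - g t|) < ε}

/-- Limit-periodicity: `g` is a uniform limit of continuous periodic functions. -/
def LimitPeriodic (g : ℝ → ℝ) : Prop :=
  ∃ gn : ℕ → ℝ → ℝ, (∀ n, Continuous (gn n) ∧ ∃ p > 0, Function.Periodic (gn n) p) ∧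
    TendstoUniformly gn g atTop

/-- The truncation `f_N = max(−N, min(f, N))`. -/
def trunc (f : ℝ → ℝ) (N : ℝ) : ℝ → ℝ := fun x => max (-N) (min (f x) N)

/-!
Truncation is 1-Lipschitz, so each `trunc f N` is a bounded μ-almost periodic function. For such
a `g` with `|g| ≤ N`, an almost period `τ` changes every window integral `∫_a^{a+T} g` by at most
`(T + 1) (η + 2 N ε)`: on each unit interval `|g (t + τ) - g t| < η` off a set of measure `≤ ε`.
Since almost periods are relatively dense, all windows of length `T` have nearly the same integral,
and cutting `[0, R]` into such windows shows that the running means of `g` form a Cauchy family.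
The hypothesis makes the running means of `f` uniform limits of those of `trunc f N₀`, so they
converge as well; and since `0 ≤ trunc f N ≤ f` increases with `N`, the means of the truncations
are squeezed up to the mean of `f`.
-/

lemma cauchySeq_of_forall_eventually_dist_lt {α β : Type*} [PseudoMetricSpace α] [Nonempty β]
    [SemilatticeSup β] {u : β → α} (h : ∀ ε > 0, ∃ c, ∀ᶠ x in atTop, dist (u x) c < ε) :
    CauchySeq u := by
  refine Metric.cauchySeq_iff.2 fun ε hε => ?_
  obtain ⟨c, hc⟩ := h (ε / 2) (half_pos hε)
  obtain ⟨N, hN⟩ := eventually_atTop.1 hc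
  exact ⟨N, fun m hm n hn => (dist_triangle_right _ _ c).trans_lt (by linarith [hN m hm, hN n hn])⟩

lemma exists_tendsto_of_approx {α β : Type*} [PseudoMetricSpace α]
    [CompleteSpace α] [Nonempty β] [SemilatticeSup β] {u : β → α}
    (h : ∀ ε > 0, ∃ v : β → α, (∃ c, Tendsto v atTop (nhds c)) ∧
      ∀ᶠ x in atTop, dist (u x) (v x) < ε) :
    ∃ m, Tendsto u atTop (nhds m) := by
  refine cauchySeq_tendsto_of_complete (cauchySeq_of_forall_eventually_dist_lt fun ε hε => ?_)
  obtain ⟨v, ⟨c, hc⟩, huv⟩ := h (ε / 2) (half_pos hε)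
  refine ⟨c, ?_⟩
  filter_upwards [huv, hc.eventually (Metric.ball_mem_nhds c (half_pos hε))] with x hx hvx
  exact (dist_triangle _ _ _).trans_lt (by linarith [Metric.mem_ball.1 hvx])

lemma tendsto_of_lower_approx {ι : Type*} {l : Filter ι} {A : ℝ → ℝ} {B : ι → ℝ → ℝ} {m : ℝ}
    {M : ι → ℝ} (hA : Tendsto A atTop (nhds m)) (hB : ∀ i, Tendsto (B i) atTop (nhds (M i)))
    (hle : ∀ᶠ i in l, ∀ᶠ T in atTop, B i T ≤ A T)
    (hge : ∀ ε > 0, ∀ᶠ i in l, ∀ᶠ T in atTop, A T - ε ≤ B i T) : Tendsto M l (nhds m) := by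
  refine tendsto_order.2 ⟨fun a ha => ?_, fun b hb => ?_⟩
  · filter_upwards [hge ((m - a) / 2) (by linarith)] with i hi
    linarith [le_of_tendsto_of_tendsto (hA.sub_const _) (hB i) hi]
  · filter_upwards [hle] with i hi
    exact (le_of_tendsto_of_tendsto (hB i) hA hi).trans_lt hb

lemma MeasureTheory.LocallyIntegrable.intervalIntegrable {E : Type*} [NormedAddCommGroup E]
    {μ : Measure ℝ} {f : ℝ → E} (hf : LocallyIntegrable f μ) (a b : ℝ) :
    IntervalIntegrable f μ a b :=
  (hf.integrableOn_isCompact isCompact_uIcc).intervalIntegrable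

lemma intervalIntegrable_of_abs_le {g : ℝ → ℝ} {N : ℝ} (hg : AEStronglyMeasurable g volume)
    (hgN : ∀ x, |g x| ≤ N) (a b : ℝ) : IntervalIntegrable g volume a b :=
  (intervalIntegrable_const (c := N)).mono_fun' hg.restrict (ae_of_all _ fun x => hgN x)

lemma integral_abs_le_add_mul_volume {h : ℝ → ℝ} {C η u v : ℝ}
    (hh : AEStronglyMeasurable h volume) (hC : ∀ t, |h t| ≤ C) (hη : 0 ≤ η) (huv : u ≤ v) :
    ∫ t in u..v, |h t| ≤ η * (v - u) + C * (volume {t ∈ Icc u v | η ≤ |h t|}).toReal := by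
  set S := {t ∈ Icc u v | η ≤ |h t|}
  set M := toMeasurable volume S
  have hC0 : 0 ≤ C := (abs_nonneg _).trans (hC 0)
  have hM : MeasurableSet M := measurableSet_toMeasurable _ _
  have hconst : ∀ c : ℝ, IntegrableOn (fun _ => c) (Ioc u v) volume := fun _ =>
    integrableOn_const measure_Ioc_lt_top.ne
  rw [intervalIntegral.integral_of_le huv]
  calc ∫ t in Ioc u v, |h t| ≤ ∫ t in Ioc u v, (η + M.indicator (fun _ => C) t) := by
        refine setIntegral_mono_on ?_ ((hconst η).add ((hconst C).indicator hM))
          measurableSet_Ioc fun t ht => ?_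
        · exact ((intervalIntegrable_of_abs_le hh hC u v).abs.1)
        by_cases htS : t ∈ S
        · rw [indicator_of_mem (subset_toMeasurable _ _ htS)]
          linarith [hC t]
        · have : |h t| < η := not_le.1 fun h' => htS ⟨Ioc_subset_Icc_self ht, h'⟩
          linarith [indicator_nonneg (fun _ _ => hC0) t (s := M)]
    _ = η * (v - u) + C * (volume (Ioc u v ∩ M)).toReal := by
        rw [integral_add (hconst η) ((hconst C).indicator hM), setIntegral_const,
          setIntegral_indicator hM, setIntegral_const]
        simp [measureReal_def, huv, mul_comm]
    _ ≤ η * (v - u) + C * (volume S).toReal := by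
        refine add_le_add_right (mul_le_mul_of_nonneg_left (ENNReal.toReal_mono ?_ ?_) hC0) _
        · exact ((measure_mono (sep_subset _ _)).trans_lt measure_Icc_lt_top).ne
        · exact (measure_mono inter_subset_right).trans (measure_toMeasurable S).le

lemma integral_le_mul_of_forall_integral_unit_le {h : ℝ → ℝ} {B : ℝ}
    (hh : ∀ a b, IntervalIntegrable h volume a b) (h0 : ∀ t, 0 ≤ h t)
    (hB : ∀ u, ∫ t in u..u + 1, h t ≤ B) (a : ℝ) {T : ℝ} (hT : 0 ≤ T) :
    ∫ t in a..a + T, h t ≤ (T + 1) * B := by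
  have hB0 : 0 ≤ B :=
    (intervalIntegral.integral_nonneg (by linarith) fun t _ => h0 t).trans (hB 0)
  calc ∫ t in a..a + T, h t ≤ ∫ t in a..a + ⌈T⌉₊, h t :=
        intervalIntegral.integral_mono_interval le_rfl (by linarith)
          (by linarith [Nat.le_ceil T]) (ae_of_all _ h0) (hh _ _)
    _ = ∑ k ∈ Finset.range ⌈T⌉₊, ∫ t in a + k..a + (k + 1 : ℕ), h t := by
        rw [intervalIntegral.sum_integral_adjacent_intervals (a := fun k : ℕ => a + k)
          fun k _ => hh _ _]
        simp
    _ ≤ ∑ k ∈ Finset.range ⌈T⌉₊, B :=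
        Finset.sum_le_sum fun k _ => by simpa [add_assoc] using hB (a + k)
    _ ≤ (T + 1) * B := by
        simpa using mul_le_mul_of_nonneg_right (Nat.ceil_lt_add_one hT).le hB0

lemma RelDense.mono {A B : Set ℝ} (hAB : A ⊆ B) (hA : RelDense A) : RelDense B := by
  obtain ⟨l, hl, h⟩ := hA
  exact ⟨l, hl, fun x => let ⟨τ, hτ, hx⟩ := h x; ⟨τ, hAB hτ, hx⟩⟩

lemma volume_sep_Icc_le_one (P : ℝ → Prop) (u : ℝ) : volume {t ∈ Icc u (u + 1) | P t} ≤ 1 :=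
  (measure_mono (sep_subset _ _)).trans (by simp)

lemma bddAbove_range_toReal_volume_sep_Icc (P : ℝ → ℝ → Prop) :
    BddAbove (range fun u => (volume {t ∈ Icc u (u + 1) | P u t}).toReal) := by
  refine ⟨1, ?_⟩
  rintro _ ⟨u, rfl⟩
  simpa using ENNReal.toReal_mono ENNReal.one_ne_top (volume_sep_Icc_le_one (P u) u)

lemma toReal_volume_le_Dfun (η : ℝ) (f g : ℝ → ℝ) (u : ℝ) :
    (volume {t ∈ Icc u (u + 1) | η ≤ |f t - g t|}).toReal ≤ Dfun η f g :=
  le_ciSup (bddAbove_range_toReal_volume_sep_Icc fun _ t => η ≤ |f t - g t|) u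

lemma Dfun_mono {η : ℝ} {f g f' g' : ℝ → ℝ} (h : ∀ t, |f t - g t| ≤ |f' t - g' t|) :
    Dfun η f g ≤ Dfun η f' g' :=
  ciSup_mono (bddAbove_range_toReal_volume_sep_Icc fun _ t => η ≤ |f' t - g' t|) fun u =>
    ENNReal.toReal_mono ((volume_sep_Icc_le_one _ u).trans_lt ENNReal.one_lt_top).ne
      (measure_mono fun t ht => ⟨ht.1, ht.2.trans (h t)⟩)

lemma abs_trunc_le {N : ℝ} (hN : 0 ≤ N) (f : ℝ → ℝ) (x : ℝ) : |trunc f N x| ≤ N :=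
  abs_le.2 ⟨le_max_left _ _, max_le (by linarith) (min_le_right _ _)⟩

lemma abs_trunc_sub_trunc_le (f : ℝ → ℝ) (N x y : ℝ) :
    |trunc f N x - trunc f N y| ≤ |f x - f y| := by
  unfold trunc
  rw [max_comm (-N), max_comm (-N)]
  refine (abs_max_sub_max_le_abs _ _ _).trans ?_
  simpa using abs_min_sub_min_le_max (f x) N (f y) N

lemma trunc_le_self {f : ℝ → ℝ} {N x : ℝ} (hN : 0 ≤ N) (hx : 0 ≤ f x) : trunc f N x ≤ f x :=
  max_le (by linarith) (min_le_left _ _)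

lemma trunc_le_trunc {f : ℝ → ℝ} {N M x : ℝ} (hN : 0 ≤ N) (hNM : N ≤ M) (hx : 0 ≤ f x) :
    trunc f N x ≤ trunc f M x :=
  max_le (le_max_of_le_right (le_min (by linarith) (by linarith)))
    (le_max_of_le_right (min_le_min_left _ hNM))

lemma MeasureTheory.AEStronglyMeasurable.trunc {f : ℝ → ℝ} (hf : AEStronglyMeasurable f volume)
    (N : ℝ) : AEStronglyMeasurable (trunc f N) volume :=
  (continuous_const.max (continuous_id.min continuous_const)).comp_aestronglyMeasurable hf

lemma MuAP.trunc {f : ℝ → ℝ} (hf : MuAP f) (N : ℝ) : MuAP (trunc f N) := fun ε hε η hη =>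
  (hf ε hε η hη).mono fun _ hτ =>
    (Dfun_mono fun t => abs_trunc_sub_trunc_le f N (t + _) t).trans hτ

def runningMean (g : ℝ → ℝ) (T : ℝ) : ℝ := (1 / T) * ∫ x in (0:ℝ)..T, g x

lemma runningMean_mono {g h : ℝ → ℝ} (hg : ∀ a b, IntervalIntegrable g volume a b)
    (hh : ∀ a b, IntervalIntegrable h volume a b) (hgh : g ≤ᵐ[volume] h) {T : ℝ} (hT : 0 ≤ T) :
    runningMean g T ≤ runningMean h T :=
  mul_le_mul_of_nonneg_left (intervalIntegral.integral_mono_ae hT (hg 0 T) (hh 0 T) hgh)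
    (by positivity)

lemma runningMean_sub {g h : ℝ → ℝ} (hg : ∀ a b, IntervalIntegrable g volume a b)
    (hh : ∀ a b, IntervalIntegrable h volume a b) (T : ℝ) :
    runningMean g T - runningMean h T = runningMean (fun x => g x - h x) T := by
  simp only [runningMean, intervalIntegral.integral_sub (hg 0 T) (hh 0 T), mul_sub]

section Truncation

variable {f : ℝ → ℝ} {N : ℝ}

lemma intervalIntegrable_trunc (hf : AEStronglyMeasurable f volume) (hN : 0 ≤ N) (a b : ℝ) :
    IntervalIntegrable (trunc f N) volume a b :=
  intervalIntegrable_of_abs_le (hf.trunc N) (abs_trunc_le hN f) a b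

lemma runningMean_trunc_le (hf : LocallyIntegrable f volume) (hpos : ∀ᵐ t, 0 ≤ f t)
    (hN : 0 ≤ N) {T : ℝ} (hT : 0 ≤ T) : runningMean (trunc f N) T ≤ runningMean f T :=
  runningMean_mono (intervalIntegrable_trunc hf.aestronglyMeasurable hN) hf.intervalIntegrable
    (hpos.mono fun _ hx => trunc_le_self hN hx) hT

lemma runningMean_trunc_mono (hf : AEStronglyMeasurable f volume) (hpos : ∀ᵐ t, 0 ≤ f t)
    {M : ℝ} (hN : 0 ≤ N) (hNM : N ≤ M) {T : ℝ} (hT : 0 ≤ T) :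
    runningMean (trunc f N) T ≤ runningMean (trunc f M) T :=
  runningMean_mono (intervalIntegrable_trunc hf hN) (intervalIntegrable_trunc hf (hN.trans hNM))
    (hpos.mono fun _ hx => trunc_le_trunc hN hNM hx) hT

end Truncation

section Bounded

variable {g : ℝ → ℝ} {N : ℝ}

lemma abs_integral_le_of_abs_le (hgN : ∀ x, |g x| ≤ N) (c d : ℝ) :
    |∫ x in c..d, g x| ≤ N * |d - c| := by
  simpa using intervalIntegral.norm_integral_le_of_norm_le_const (a := c) (b := d)
    fun x _ => (Real.norm_eq_abs (g x)).trans_le (hgN x)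

lemma abs_integral_comp_add_sub_integral_le (hg : AEStronglyMeasurable g volume)
    (hgN : ∀ x, |g x| ≤ N) {η ε τ : ℝ} (hη : 0 ≤ η) (hτ : Dfun η (fun t => g (t + τ)) g ≤ ε)
    (a : ℝ) {T : ℝ} (hT : 0 ≤ T) :
    |(∫ t in a..a + T, g (t + τ)) - ∫ t in a..a + T, g t| ≤ (T + 1) * (η + 2 * N * ε) := by
  have hN : 0 ≤ N := (abs_nonneg _).trans (hgN 0)
  have hgτ : AEStronglyMeasurable (fun t => g (t + τ)) volume :=
    hg.comp_measurePreserving (measurePreserving_add_right volume τ)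
  have hd : ∀ t, |g (t + τ) - g t| ≤ 2 * N := fun t => by
    linarith [abs_sub (g (t + τ)) (g t), hgN (t + τ), hgN t]
  have hdm := hgτ.sub hg
  rw [← intervalIntegral.integral_sub (intervalIntegrable_of_abs_le hgτ (fun t => hgN _) _ _)
    (intervalIntegrable_of_abs_le hg hgN _ _)]
  refine (intervalIntegral.abs_integral_le_integral_abs (by linarith)).trans
    (integral_le_mul_of_forall_integral_unit_le
      (fun a b => (intervalIntegrable_of_abs_le hdm hd a b).abs) (fun t => abs_nonneg _)
      (fun u => ?_) a hT)
  calc ∫ t in u..u + 1, |g (t + τ) - g t|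
      ≤ η * (u + 1 - u) + 2 * N * (volume {t ∈ Icc u (u + 1) | η ≤ |g (t + τ) - g t|}).toReal :=
        integral_abs_le_add_mul_volume hdm hd hη (by linarith)
    _ ≤ η + 2 * N * ε := by
        have := (toReal_volume_le_Dfun η (fun t => g (t + τ)) g u).trans hτ
        nlinarith

lemma abs_integral_sub_integral_le_of_abs_le (hgi : ∀ a b, IntervalIntegrable g volume a b)
    (hgN : ∀ x, |g x| ≤ N) (s b T : ℝ) :
    |(∫ x in s..s + T, g x) - ∫ x in b..b + T, g x| ≤ 2 * N * |s - b| := by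
  rw [intervalIntegral.integral_interval_sub_interval_comm (hgi _ _) (hgi _ _) (hgi _ _)]
  have h1 := abs_integral_le_of_abs_le hgN s b
  have h2 := abs_integral_le_of_abs_le hgN (s + T) (b + T)
  rw [add_sub_add_right_eq_sub] at h2
  rw [abs_sub_comm b s] at h1 h2
  linarith [abs_sub (∫ x in s..b, g x) (∫ x in (s + T)..(b + T), g x)]

lemma abs_integral_sub_integral_le_of_relDense (hg : AEStronglyMeasurable g volume)
    (hgN : ∀ x, |g x| ≤ N) {η ε l : ℝ} (hη : 0 ≤ η)
    (hA : ∀ x, ∃ τ ∈ {τ | Dfun η (fun t => g (t + τ)) g ≤ ε}, x < τ ∧ τ < x + l)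
    (a b : ℝ) {T : ℝ} (hT : 0 ≤ T) :
    |(∫ x in a..a + T, g x) - ∫ x in b..b + T, g x| ≤ (T + 1) * (η + 2 * N * ε) + 2 * N * l := by
  have hN : 0 ≤ N := (abs_nonneg _).trans (hgN 0)
  obtain ⟨τ, hτ, hτb, hτl⟩ := hA (b - a)
  have hshift := abs_integral_comp_add_sub_integral_le hg hgN hη hτ a hT
  rw [intervalIntegral.integral_comp_add_right, add_right_comm, abs_sub_comm] at hshift
  have hend := abs_integral_sub_integral_le_of_abs_le (intervalIntegrable_of_abs_le hg hgN) hgN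
    (a + τ) b T
  have hsb : |a + τ - b| ≤ l := abs_le.2 ⟨by linarith, by linarith⟩
  calc |(∫ x in a..a + T, g x) - ∫ x in b..b + T, g x|
      ≤ |(∫ x in a..a + T, g x) - ∫ x in a + τ..a + τ + T, g x|
        + |(∫ x in a + τ..a + τ + T, g x) - ∫ x in b..b + T, g x| := abs_sub_le _ _ _
    _ ≤ _ := by nlinarith

lemma abs_integral_nat_mul_sub_le (hgi : ∀ a b, IntervalIntegrable g volume a b) {T W : ℝ}
    (hW : ∀ a, |(∫ x in a..a + T, g x) - ∫ x in (0:ℝ)..T, g x| ≤ W) (n : ℕ) :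
    |(∫ x in (0:ℝ)..n * T, g x) - n * ∫ x in (0:ℝ)..T, g x| ≤ n * W := by
  induction n with
  | zero => simp
  | succ n ih =>
    rw [Nat.cast_succ, add_mul, one_mul,
      ← intervalIntegral.integral_add_adjacent_intervals (hgi 0 (n * T)) (hgi _ (n * T + T))]
    have hsplit : (∫ x in (0:ℝ)..n * T, g x) + (∫ x in n * T..n * T + T, g x)
          - (n + 1) * ∫ x in (0:ℝ)..T, g x
        = ((∫ x in (0:ℝ)..n * T, g x) - n * ∫ x in (0:ℝ)..T, g x)
          + ((∫ x in n * T..n * T + T, g x) - ∫ x in (0:ℝ)..T, g x) := by ring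
    rw [hsplit]
    linarith [abs_add_le ((∫ x in (0:ℝ)..n * T, g x) - n * ∫ x in (0:ℝ)..T, g x)
      ((∫ x in n * T..n * T + T, g x) - ∫ x in (0:ℝ)..T, g x), hW (n * T)]

lemma abs_integral_sub_div_mul_integral_le (hg : AEStronglyMeasurable g volume)
    (hgN : ∀ x, |g x| ≤ N) {T W : ℝ} (hT : 0 < T)
    (hW : ∀ a, |(∫ x in a..a + T, g x) - ∫ x in (0:ℝ)..T, g x| ≤ W) {R : ℝ} (hR : 0 ≤ R) :
    |(∫ x in (0:ℝ)..R, g x) - R / T * ∫ x in (0:ℝ)..T, g x| ≤ R / T * W + 2 * N * T := by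
  have hgi := intervalIntegrable_of_abs_le hg hgN
  set n := ⌊R / T⌋₊
  have hn : (n : ℝ) ≤ R / T := Nat.floor_le (div_nonneg hR hT.le)
  have hnR : (n : ℝ) * T ≤ R := (le_div_iff₀ hT).1 hn
  have hRn : R < (n + 1) * T := (div_lt_iff₀ hT).1 (Nat.lt_floor_add_one _)
  have hW0 : 0 ≤ W := by simpa using hW 0
  have htail := abs_integral_le_of_abs_le hgN (n * T) R
  have hIT := abs_integral_le_of_abs_le hgN 0 T
  rw [sub_zero, abs_of_pos hT] at hIT
  rw [abs_of_nonneg (sub_nonneg.2 hnR)] at htail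
  have htail' : |∫ x in n * T..R, g x| ≤ N * T :=
    htail.trans (mul_le_mul_of_nonneg_left (by linarith) ((abs_nonneg _).trans (hgN 0)))
  have hfrac : |((n : ℝ) - R / T) * ∫ x in (0:ℝ)..T, g x| ≤ N * T := by
    rw [abs_mul, abs_of_nonpos (by linarith)]
    have : R / T - n < 1 := by linarith [Nat.lt_floor_add_one (R / T)]
    nlinarith [abs_nonneg (∫ x in (0:ℝ)..T, g x)]
  have hsplit : (∫ x in (0:ℝ)..R, g x) - R / T * ∫ x in (0:ℝ)..T, g x
      = ((∫ x in (0:ℝ)..n * T, g x) - n * ∫ x in (0:ℝ)..T, g x) + (∫ x in n * T..R, g x)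
        + ((n : ℝ) - R / T) * ∫ x in (0:ℝ)..T, g x := by
    rw [← intervalIntegral.integral_add_adjacent_intervals (hgi 0 (n * T)) (hgi _ R)]
    ring
  rw [hsplit]
  have hmul := abs_integral_nat_mul_sub_le hgi hW n
  have hnW : (n : ℝ) * W ≤ R / T * W := mul_le_mul_of_nonneg_right hn hW0
  refine (abs_add_three _ _ _).trans ?_
  linarith

lemma abs_runningMean_sub_le (hg : AEStronglyMeasurable g volume)
    (hgN : ∀ x, |g x| ≤ N) {T W : ℝ} (hT : 0 < T)
    (hW : ∀ a, |(∫ x in a..a + T, g x) - ∫ x in (0:ℝ)..T, g x| ≤ W) {R : ℝ} (hR : 0 < R) :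
    |runningMean g R - runningMean g T| ≤ W / T + 2 * N * T / R := by
  have hdiff : runningMean g R - runningMean g T
      = ((∫ x in (0:ℝ)..R, g x) - R / T * ∫ x in (0:ℝ)..T, g x) / R := by
    unfold runningMean
    field_simp
  rw [hdiff, abs_div, abs_of_pos hR, div_le_iff₀ hR]
  calc _ ≤ R / T * W + 2 * N * T := abs_integral_sub_div_mul_integral_le hg hgN hT hW hR.le
    _ = (W / T + 2 * N * T / R) * R := by field_simp

theorem MuAP.exists_tendsto_runningMean (hap : MuAP g) (hg : AEStronglyMeasurable g volume)
    (hgN : ∀ x, |g x| ≤ N) : ∃ m, Tendsto (runningMean g) atTop (nhds m) := by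
  have hN : 0 ≤ N := (abs_nonneg _).trans (hgN 0)
  refine cauchySeq_tendsto_of_complete (cauchySeq_of_forall_eventually_dist_lt fun ε hε => ?_)
  obtain ⟨l, hl, hA⟩ := hap (ε / (32 * (N + 1))) (by positivity) (ε / 16) (by positivity)
  have hδ : ε / 16 + 2 * N * (ε / (32 * (N + 1))) ≤ ε / 8 := by
    have : 2 * N * (ε / (32 * (N + 1))) ≤ ε / 16 := by
      rw [mul_div_assoc', div_le_div_iff₀ (by positivity) (by norm_num)]
      nlinarith
    linarith
  set δ := ε / 16 + 2 * N * (ε / (32 * (N + 1)))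
  set T := 1 + 8 * N * l / ε
  have hT : 1 ≤ T := le_add_of_nonneg_right (by positivity)
  have hlT : 2 * N * l / T ≤ ε / 4 := by
    rw [div_le_iff₀ (by linarith)]
    have : 8 * N * l / ε * ε = 8 * N * l := div_mul_cancel₀ _ hε.ne'
    nlinarith
  have hW := fun a => abs_integral_sub_integral_le_of_relDense hg hgN (by positivity) hA a 0
    (T := T) (by linarith)
  simp only [zero_add] at hW
  refine ⟨runningMean g T, ?_⟩
  filter_upwards [eventually_gt_atTop (8 * N * T / ε), eventually_gt_atTop 0] with R hRT hR
  rw [Real.dist_eq]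
  refine (abs_runningMean_sub_le hg hgN (by linarith) hW hR).trans_lt ?_
  have hTR : 2 * N * T / R < ε / 4 := by
    rw [div_lt_iff₀ hR]
    rw [div_lt_iff₀ hε] at hRT
    linarith
  have hδT : δ / T ≤ ε / 8 := (div_le_self (by positivity) hT).trans hδ
  have : ((T + 1) * δ + 2 * N * l) / T = δ + δ / T + 2 * N * l / T := by
    field_simp
  linarith

end Bounded

theorem stmt12 (f : ℝ → ℝ) (hf : LocallyIntegrable f volume) (hap : MuAP f)
    (hpos : ∀ᵐ t, 0 ≤ f t)
    (hcond : ∀ ε > 0, ∃ T₀ > 0, ∃ N₀ > 0, ∀ T ≥ T₀,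
      (1 / T) * ∫ x in (0:ℝ)..T, (f x - trunc f N₀ x) < ε) :
    ∃ m : ℝ, Tendsto (fun T => (1 / T) * ∫ x in (0:ℝ)..T, f x) atTop (nhds m) ∧
      ∀ MN : ℝ → ℝ,
        (∀ N, Tendsto (fun T => (1 / T) * ∫ x in (0:ℝ)..T, trunc f N x)
          atTop (nhds (MN N))) →
        Tendsto MN atTop (nhds m) := by
  have hfm := hf.aestronglyMeasurable
  have hgap : ∀ ε > 0, ∃ N₀ > 0, ∀ᶠ T in atTop,
      |runningMean f T - runningMean (trunc f N₀) T| < ε := by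
    intro ε hε
    obtain ⟨T₀, -, N₀, hN₀, hT₀⟩ := hcond ε hε
    refine ⟨N₀, hN₀, ?_⟩
    filter_upwards [eventually_ge_atTop T₀, eventually_ge_atTop 0] with T hT hT0
    rw [abs_of_nonneg (sub_nonneg.2 (runningMean_trunc_le hf hpos hN₀.le hT0)),
      runningMean_sub hf.intervalIntegrable (intervalIntegrable_trunc hfm hN₀.le)]
    exact hT₀ T hT
  obtain ⟨m, hm⟩ : ∃ m, Tendsto (runningMean f) atTop (nhds m) :=
    exists_tendsto_of_approx fun ε hε =>
      let ⟨N₀, hN₀, hclose⟩ := hgap ε hε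
      ⟨_, (hap.trunc N₀).exists_tendsto_runningMean (hfm.trunc N₀) (abs_trunc_le hN₀.le f),
        hclose⟩
  refine ⟨m, hm, fun MN hMN => tendsto_of_lower_approx hm hMN ?_ fun ε hε => ?_⟩
  · filter_upwards [eventually_ge_atTop 0] with N hN
    filter_upwards [eventually_ge_atTop 0] with T hT using runningMean_trunc_le hf hpos hN hT
  · obtain ⟨N₀, hN₀, hclose⟩ := hgap ε hε
    filter_upwards [eventually_ge_atTop N₀] with N hN
    filter_upwards [hclose, eventually_ge_atTop 0] with T hTε hT
    show runningMean f T - ε ≤ runningMean (trunc f N) T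
    linarith [abs_lt.1 hTε, runningMean_trunc_mono hfm hpos hN₀.le hN hT]
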